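/- arXiv:1501.06136 — 4 statements merged into one kernel-verified Lean document; each statement's English description precedes it below -/
import Mathlib

section
/- Let w = s_{i_1}⋯s_{i_r} be a reduced word in the Weyl group and fix a simple root index s. Let β_{s,1} < β_{s,2} < ⋯ < β_{s,m} be the roots β_k = s_{i_1}⋯s_{i_{k-1}}(α_{i_k}) (in order of k) for which i_k = s, where m is the number of occurrences of s in the reduced word. Then β_{s,1} + β_{s,2} + ⋯ + β_{s,m} = Λ_s − w(Λ_s), where Λ_s is the fundamental weight dual to α_s. -/
open scoped RealInnerProductSpace

noncomputable section

/-- Data of a finite root system in a real inner product space, with a chosen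
set of positive roots, simple roots and reflections. -/
structure RootSystemData (V : Type*) [NormedAddCommGroup V] [InnerProductSpace ℝ V] where
  /-- number of simple roots -/
  n : ℕ
  /-- the set of all roots -/
  Δ : Set V
  finite : Δ.Finite
  /-- the set of positive roots -/
  pos : Set V
  pos_subset : pos ⊆ Δ
  /-- the simple roots -/
  simple : Fin n → V
  simple_pos : ∀ i, simple i ∈ pos
  root_ne_zero : ∀ α ∈ Δ, α ≠ 0
  neg_mem : ∀ α ∈ Δ, -α ∈ Δ
  pos_iff : ∀ α ∈ Δ, (α ∈ pos ↔ ¬ (-α ∈ pos))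
  /-- the reflection in a root -/
  refl : V → (V ≃ₗ[ℝ] V)
  refl_apply : ∀ α, α ≠ 0 → ∀ x, refl α x = x - (2 * ⟪x, α⟫ / ⟪α, α⟫) • α
  refl_root : ∀ α ∈ Δ, ∀ β ∈ Δ, refl α β ∈ Δ
  simple_refl_pos : ∀ i, ∀ β ∈ pos, β ≠ simple i → refl (simple i) β ∈ pos
  simple_indep : LinearIndependent ℝ simple
  pos_combo : ∀ α ∈ pos, ∃ c : Fin n → ℝ, (∀ i, 0 ≤ c i) ∧ α = ∑ i, c i • simple i

namespace RootSystemData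

variable {V : Type*} [NormedAddCommGroup V] [InnerProductSpace ℝ V] (R : RootSystemData V)

/-- The Weyl group, as the subgroup of linear automorphisms generated by the
simple reflections. -/
def weylGroup : Subgroup (V ≃ₗ[ℝ] V) :=
  Subgroup.closure (Set.range fun i => R.refl (R.simple i))

/-- The length of a Weyl group element: the least length of an expression as a
product of simple reflections. -/
def len (w : V ≃ₗ[ℝ] V) : ℕ :=
  sInf {r | ∃ f : Fin r → Fin R.n,
    w = (List.ofFn fun k => R.refl (R.simple (f k))).prod}

/-- `Φ_w = w(Δ⁻) ∩ Δ⁺`, i.e. the positive roots sent by `w⁻¹` to negative roots. -/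
def Phi (w : V ≃ₗ[ℝ] V) : Set V :=
  {α | α ∈ R.pos ∧ w⁻¹ α ∈ R.Δ ∧ w⁻¹ α ∉ R.pos}

/-- A subset `S` of the positive roots is saturated if `α, β ∈ S` and `α + β` a
root imply `α + β ∈ S`. -/
def Saturated (S : Set V) : Prop :=
  ∀ α ∈ S, ∀ β ∈ S, α + β ∈ R.Δ → α + β ∈ S

end RootSystemData

/-- For a reduced word `w = s_{i_1} ⋯ s_{i_r}` and a simple root
index `s`, the sum of the roots `β_k = s_{i_1} ⋯ s_{i_{k-1}}(α_{i_k})` over the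
positions `k` at which the letter `s` occurs equals `Λ_s − w(Λ_s)`, where `Λ_s`
is the fundamental weight dual to `α_s`. -/
theorem sum_beta_occurrences {V : Type*} [NormedAddCommGroup V] [InnerProductSpace ℝ V]
    (R : RootSystemData V) (r : ℕ) (f : Fin r → Fin R.n) (w : V ≃ₗ[ℝ] V)
    (hw : w = (List.ofFn fun k => R.refl (R.simple (f k))).prod)
    (hred : R.len w = r)
    (β : Fin r → V)
    (hβ : ∀ k : Fin r, β k =
      (List.ofFn fun j : Fin k.1 => R.refl (R.simple (f ⟨j.1, j.2.trans k.2⟩))).prod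
        (R.simple (f k)))
    (Λ : Fin R.n → V)
    (hΛ : ∀ i j, 2 * ⟪Λ i, R.simple j⟫ =
      (if i = j then ⟪R.simple j, R.simple j⟫ else 0))
    (s : Fin R.n) :
    ∑ k ∈ Finset.univ.filter (fun k => f k = s), β k = Λ s - w (Λ s) := by
  classical
  let f' : ℕ → Fin R.n := fun j => if h : j < r then f ⟨j, h⟩ else s
  let F : ℕ → V := fun m =>
    ((List.ofFn fun j : Fin m => R.refl (R.simple (f' j))).prod) (Λ s)
  have hlist : ∀ m : ℕ, ∀ hm : m ≤ r,
      (List.ofFn fun j : Fin m => R.refl (R.simple (f' j))) =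
      (List.ofFn fun j : Fin m => R.refl (R.simple (f ⟨j.1, lt_of_lt_of_le j.2 hm⟩))) := by
    intro m hm
    congr 1; funext j
    simp only [f']
    rw [dif_pos (lt_of_lt_of_le j.2 hm)]
  have hF0 : F 0 = Λ s := by simp [F]
  have hFr : F r = w (Λ s) := by
    show (List.ofFn fun j : Fin r => R.refl (R.simple (f' j))).prod (Λ s) = _
    rw [hlist r le_rfl, hw]
  have key : ∀ k : Fin r, F k.1 - F (k.1 + 1) = if f k = s then β k else 0 := by
    intro k
    set α : V := R.simple (f k) with hαdef
    have hα0 : α ≠ 0 := R.root_ne_zero α (R.pos_subset (R.simple_pos _))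
    have hαα : ⟪α, α⟫ ≠ 0 := by
      rw [Ne, inner_self_eq_zero]; exact hα0
    have hf'k : f' k.1 = f k := by
      simp only [f']; rw [dif_pos k.2]
    have hsucc : F (k.1 + 1) =
        ((List.ofFn fun j : Fin k.1 => R.refl (R.simple (f' j))).prod)
          ((R.refl α) (Λ s)) := by
      simp only [F]
      rw [List.ofFn_succ', List.prod_concat]
      simp only [Fin.coe_castSucc, Fin.val_last, hf'k]
      rfl
    have hrefl : (R.refl α) (Λ s) =
        Λ s - (2 * ⟪Λ s, α⟫ / ⟪α, α⟫) • α := R.refl_apply α hα0 (Λ s)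
    have hcoef : 2 * ⟪Λ s, α⟫ = if f k = s then ⟪α, α⟫ else 0 := by
      rw [hΛ s (f k), hαdef]
      by_cases h : f k = s
      · rw [if_pos h, if_pos h.symm, h]
      · rw [if_neg h, if_neg fun e => h e.symm]
    by_cases h : f k = s
    · have : (R.refl α) (Λ s) = Λ s - α := by
        rw [hrefl, hcoef, if_pos h, div_self hαα, one_smul]
      rw [hsucc, this, map_sub, if_pos h]
      have hβk : β k = ((List.ofFn fun j : Fin k.1 => R.refl (R.simple (f' j))).prod) α := by
        rw [hβ k, hlist k.1 (le_of_lt k.2)]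
      rw [hβk]
      abel
    · have : (R.refl α) (Λ s) = Λ s := by
        rw [hrefl, hcoef, if_neg h, zero_div, zero_smul, sub_zero]
      rw [hsucc, this, if_neg h, sub_self]
  rw [Finset.sum_filter]
  have h1 : ∑ k : Fin r, (if f k = s then β k else 0) = ∑ k : Fin r, (F k.1 - F (k.1 + 1)) :=
    Finset.sum_congr rfl fun k _ => (key k).symm
  rw [h1, Fin.sum_univ_eq_sum_range (fun i => F i - F (i + 1)) r,
    Finset.sum_range_sub' F r, hF0, hFr]
end
end

section
/- Let w = s_{i_1}⋯s_{i_r} be reduced, fix s, and for t ≤ (number of occurrences of s) let w_{s,t} be the prefix of the reduced word ending at the t-th occurrence of s. Then β_{s,1} + ⋯ + β_{s,t} = Λ_s − w_{s,t}(Λ_s). -/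
open scoped RealInnerProductSpace

noncomputable section

/-!
Write `u_k` for the product of the first `k` letters of the word. The difference
`Λ - u_p Λ` telescopes into `∑_{k < p} u_k (Λ - s_{i_{k+1}} Λ)`, and since
`s_i Λ_s = Λ_s - δ_{is} α_i`, only the positions carrying the letter `s` contribute, each
with `u_k α_s = β_{k+1}`.
-/

theorem sub_ofFn_prod_smul_eq_sum {M A : Type*} [Monoid M] [AddCommGroup A]
    [DistribMulAction M A] {p : ℕ} (g : Fin p → M) (x : A) :
    x - (List.ofFn g).prod • x =
      ∑ k : Fin p, (List.ofFn fun j : Fin k => g (Fin.castLE k.2.le j)).prod • (x - g k • x) := by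
  induction p with
  | zero => simp
  | succ p ih =>
    calc x - (List.ofFn g).prod • x
        = (x - (List.ofFn fun j => g j.castSucc).prod • x) +
            (List.ofFn fun j => g j.castSucc).prod • (x - g (Fin.last p) • x) := by
          rw [List.ofFn_succ', List.prod_concat, mul_smul, smul_sub, sub_add_sub_cancel]
      _ = _ := by rw [ih, Fin.sum_univ_castSucc]; rfl

namespace RootSystemData

variable {V : Type*} [NormedAddCommGroup V] [InnerProductSpace ℝ V] (R : RootSystemData V)

theorem sub_refl_simple_apply_fundamental {Λ : Fin R.n → V}
    (hΛ : ∀ i j, 2 * ⟪Λ i, R.simple j⟫ = if i = j then ⟪R.simple j, R.simple j⟫ else 0)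
    (s i : Fin R.n) :
    Λ s - R.refl (R.simple i) (Λ s) = if i = s then R.simple i else 0 := by
  have hα : R.simple i ≠ 0 := R.root_ne_zero _ (R.pos_subset (R.simple_pos i))
  rw [R.refl_apply _ hα, sub_sub_cancel, hΛ s i]
  by_cases h : i = s
  · subst h
    rw [if_pos rfl, if_pos rfl, div_self ((inner_self_ne_zero (𝕜 := ℝ)).mpr hα), one_smul]
  · rw [if_neg (Ne.symm h), if_neg h, zero_div, zero_smul]

end RootSystemData

theorem sum_beta_occurrences_prefix_general {V : Type*} [NormedAddCommGroup V] [InnerProductSpace ℝ V]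
    (R : RootSystemData V) (r : ℕ) (f : Fin r → Fin R.n)
    (β : Fin r → V)
    (hβ : ∀ k : Fin r, β k =
      (List.ofFn fun j : Fin k.1 => R.refl (R.simple (f ⟨j.1, j.2.trans k.2⟩))).prod
        (R.simple (f k)))
    (Λ : Fin R.n → V)
    (hΛ : ∀ i j, 2 * ⟪Λ i, R.simple j⟫ =
      (if i = j then ⟪R.simple j, R.simple j⟫ else 0))
    (s : Fin R.n) (m : Fin r) :
    ∑ k ∈ Finset.univ.filter (fun k => k ≤ m ∧ f k = s), β k =
      Λ s -
        ((List.ofFn fun j : Fin (m.1 + 1) =>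
            R.refl (R.simple (f ⟨j.1, lt_of_lt_of_le j.2 m.2⟩))).prod) (Λ s) := by
  have hfilter : Finset.univ.filter (fun k => k ≤ m ∧ f k = s) =
      (Finset.Iic m).filter (fun k => f k = s) := by
    ext k; simp
  have hIic : Finset.Iic (Fin.last m.1) = Finset.univ := by
    rw [← Fin.top_eq_last, Finset.Iic_top]
  rw [hfilter, Finset.sum_filter, ← LinearEquiv.smul_def, sub_ofFn_prod_smul_eq_sum, ← hIic]
  refine (Fin.sum_Iic_castLE m.2 _ (Fin.last m)).trans (Finset.sum_congr rfl fun k _ => ?_)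
  rw [LinearEquiv.smul_def, LinearEquiv.smul_def, R.sub_refl_simple_apply_fundamental hΛ,
    apply_ite (DFunLike.coe _), map_zero, hβ]
  -- `Fin.castLE` and the anonymous constructors in `hβ` index the prefixes definitionally alike
  rfl

/-- For a reduced word `w = s_{i_1} ⋯ s_{i_r}`, a simple root index
`s`, and a position `m` at which `s` occurs, the sum of the roots
`β_k = s_{i_1} ⋯ s_{i_{k-1}}(α_{i_k})` over the positions `k ≤ m` with letter
`s` equals `Λ_s − w_{s,t}(Λ_s)`, where `w_{s,t} = s_{i_1} ⋯ s_{i_m}` is the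
prefix ending at the `t`-th occurrence `m` of `s`. -/
theorem sum_beta_occurrences_prefix {V : Type*} [NormedAddCommGroup V] [InnerProductSpace ℝ V]
    (R : RootSystemData V) (r : ℕ) (f : Fin r → Fin R.n) (w : V ≃ₗ[ℝ] V)
    (hw : w = (List.ofFn fun k => R.refl (R.simple (f k))).prod)
    (hred : R.len w = r)
    (β : Fin r → V)
    (hβ : ∀ k : Fin r, β k =
      (List.ofFn fun j : Fin k.1 => R.refl (R.simple (f ⟨j.1, j.2.trans k.2⟩))).prod
        (R.simple (f k)))
    (Λ : Fin R.n → V)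
    (hΛ : ∀ i j, 2 * ⟪Λ i, R.simple j⟫ =
      (if i = j then ⟪R.simple j, R.simple j⟫ else 0))
    (s : Fin R.n) (m : Fin r) (hm : f m = s) :
    ∑ k ∈ Finset.univ.filter (fun k => k ≤ m ∧ f k = s), β k =
      Λ s -
        ((List.ofFn fun j : Fin (m.1 + 1) =>
            R.refl (R.simple (f ⟨j.1, lt_of_lt_of_le j.2 m.2⟩))).prod) (Λ s) :=
  sum_beta_occurrences_prefix_general R r f β hβ Λ hΛ s m
end
end

section
/- Let a, c ≥ 1 and let M = I_{a+1+c} + [[0,0,I_c],[0,I_1,0],[I_a,0,0]] (block matrix with blocks of sizes c, 1, a along the diagonal and antidiagonal identity blocks). Set p = a+1, q = c+1, Δ = gcd(p,q), and write p = xΔ, q = yΔ. Then the corank of M equals Δ − 1 if x + y is even, and equals 1 if x + y is odd. -/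
/-!
`wMat a 1 c 1 1 1 = 1 + P`, where `P` has a single `1` in each row `i`, in column `wMap a c i`;
so its kernel consists of the `v` with `v ∘ wMap a c = -v`. On each cycle of the permutation
`wMap a c` such a `v` is determined by one value, which must vanish when the cycle is odd: the
corank is the number of even cycles.

With `p = a + 1`, `q = c + 1`, read `Fin (p + q - 1)` as `ZMod (p + q)` without the point `-1`.
Then `wMap a c` is the rotation `j ↦ j + p` with `-1` skipped (`q - 1 ↦ -1 ↦ p - 1` becomes
`q - 1 ↦ p - 1`). The rotation has `Δ` cycles, the residue classes mod `Δ`, all of length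
`x + y`; skipping `-1` shortens one of them to `x + y - 1`.
-/

noncomputable section

/-- The matrix `w([a,ε_a];[b,ε_b];[c,ε_c]) = I_{a+b+c} + K`, where `K` is the
block matrix `[[0,0,ε_c I_c],[0,ε_b I_b,0],[ε_a I_a,0,0]]` with row blocks of
sizes `(c, b, a)` and column blocks of sizes `(a, b, c)`; blocks of size `0`
are omitted. -/
def wMat (a b c : ℕ) (εa εb εc : ℚ) :
    Matrix (Fin (a + b + c)) (Fin (a + b + c)) ℚ :=
  1 + Matrix.of (fun i j =>
    if i.1 < c ∧ j.1 = i.1 + a + b then εc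
    else if c ≤ i.1 ∧ i.1 < c + b ∧ j.1 + c = i.1 + a then εb
    else if c + b ≤ i.1 ∧ j.1 + c + b = i.1 then εa else 0)

/-- The corank of a square rational matrix: the dimension of its null space. -/
def corank {m : ℕ} (A : Matrix (Fin m) (Fin m) ℚ) : ℕ :=
  Module.finrank ℚ (LinearMap.ker (Matrix.toLin' A))

open Module

theorem Nat.ModEq.eq_and_modEq_of_mul_add {Δ s m m' r r' : ℕ} (hr : r < Δ) (hr' : r' < Δ)
    (h : m * Δ + r ≡ m' * Δ + r' [MOD s * Δ]) : r = r' ∧ m ≡ m' [MOD s] := by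
  have hrr : r = r' := by
    have h' := Nat.ModEq.of_mul_left s h
    unfold Nat.ModEq at h'
    rwa [Nat.mul_add_mod', Nat.mul_add_mod', Nat.mod_eq_of_lt hr, Nat.mod_eq_of_lt hr'] at h'
  subst hrr
  exact ⟨rfl, Nat.ModEq.mul_right_cancel' (by omega) (Nat.ModEq.add_right_cancel' r h)⟩

theorem ZMod.val_lt_of_ne_neg_one {n : ℕ} {z : ZMod (n + 1)} (hz : z ≠ -1) : z.val < n := by
  refine lt_of_le_of_ne (Nat.lt_succ_iff.1 (ZMod.val_lt z)) fun h => hz (ZMod.val_injective _ ?_)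
  rw [h, ZMod.val_neg_one]

theorem Nat.eq_of_natCast_zmod_eq {N m n : ℕ} (hm : m < N) (hn : n < N)
    (h : (m : ZMod N) = n) : m = n := by
  rwa [ZMod.natCast_eq_natCast_iff', Nat.mod_eq_of_lt hm, Nat.mod_eq_of_lt hn] at h

theorem val_finRotate {n : ℕ} (k : Fin n) :
    (finRotate n k : ℕ) = if (k : ℕ) + 1 = n then 0 else (k : ℕ) + 1 := by
  cases n with
  | zero => exact k.elim0
  | succ n =>
    rw [coe_finRotate]
    simp only [Fin.ext_iff, Fin.val_last]
    split_ifs <;> omega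

section AntiInvariants

variable (K : Type*) [Field K] {α β : Type*}

def antiInvariants (f : α → α) : Submodule K (α → K) :=
  LinearMap.ker (LinearMap.id + LinearMap.funLeft K K f)

variable {K}

theorem mem_antiInvariants {f : α → α} {v : α → K} :
    v ∈ antiInvariants K f ↔ ∀ i, v (f i) = -v i := by
  simp only [antiInvariants, LinearMap.mem_ker, LinearMap.add_apply, LinearMap.id_apply,
    LinearMap.funLeft_apply, funext_iff, Pi.add_apply, Pi.zero_apply]
  exact forall_congr' fun i => by rw [add_comm, add_eq_zero_iff_eq_neg]

theorem finrank_antiInvariants_of_semiconj {f : α → α} {g : β → β} (e : β ≃ α)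
    (h : Function.Semiconj e g f) :
    finrank K (antiInvariants K f) = finrank K (antiInvariants K g) := by
  refine (LinearEquiv.ofSubmodules (LinearEquiv.funCongrLeft K K e) _ _ ?_).finrank_eq
  ext w
  simp only [Submodule.mem_map_equiv, mem_antiInvariants, LinearEquiv.funCongrLeft_symm,
    LinearEquiv.funCongrLeft_apply, LinearMap.funLeft_apply]
  refine ⟨fun H b => ?_, fun H i => ?_⟩
  · simpa [← h b] using H (e b)
  · obtain ⟨b, rfl⟩ := e.surjective i
    simpa [← h b] using H b

theorem finrank_antiInvariants_sigma {ι : Type*} [Fintype ι] {κ : ι → Type*}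
    [∀ i, Fintype (κ i)] (g : ∀ i, κ i → κ i) :
    finrank K (antiInvariants K (Sigma.map id g)) = ∑ i, finrank K (antiInvariants K (g i)) := by
  rw [← Module.finrank_pi_fintype]
  exact LinearEquiv.finrank_eq
    { toFun := fun v i => ⟨fun k => v.1 ⟨i, k⟩,
        mem_antiInvariants.2 fun k => mem_antiInvariants.1 v.2 ⟨i, k⟩⟩
      invFun := fun w => ⟨fun x => (w x.1).1 x.2,
        mem_antiInvariants.2 fun x => mem_antiInvariants.1 (w x.1).2 x.2⟩
      map_add' := fun _ _ => rfl
      map_smul' := fun _ _ => rfl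
      left_inv := fun _ => rfl
      right_inv := fun _ => rfl }

theorem apply_eq_neg_one_pow_mul_apply_zero {m : ℕ} {v : Fin (m + 1) → K}
    (hv : v ∈ antiInvariants K (finRotate (m + 1))) (k : Fin (m + 1)) :
    v k = (-1) ^ (k : ℕ) * v 0 := by
  induction k using Fin.induction with
  | zero => simp
  | succ i ih =>
    rw [← Fin.coeSucc_eq_succ, ← finRotate_apply, mem_antiInvariants.1 hv, ih]
    simp [pow_succ]

theorem finrank_antiInvariants_finRotate [NeZero (2 : K)] {n : ℕ} (hn : n ≠ 0) :
    finrank K (antiInvariants K (finRotate n)) = if Even n then 1 else 0 := by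
  obtain ⟨m, rfl⟩ := Nat.exists_eq_succ_of_ne_zero hn
  have wrap : ∀ v ∈ antiInvariants K (finRotate (m + 1)), v 0 = (-1) ^ (m + 1) * v 0 := by
    intro v hv
    calc v 0 = v (finRotate (m + 1) (Fin.last m)) := by rw [finRotate_last]
      _ = (-1) ^ (m + 1) * v 0 := by
        rw [mem_antiInvariants.1 hv, apply_eq_neg_one_pow_mul_apply_zero hv]
        simp [pow_succ]
  split_ifs with hev
  · set u : Fin (m + 1) → K := fun k => (-1) ^ (k : ℕ)
    have hu : u ∈ antiInvariants K (finRotate (m + 1)) := by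
      rw [mem_antiInvariants]
      intro k
      simp only [u, coe_finRotate]
      split_ifs with hk
      · subst hk
        simp [(Nat.not_even_iff_odd.1 (Nat.even_add_one.1 hev)).neg_one_pow]
      · simp [pow_succ]
    have hspan : antiInvariants K (finRotate (m + 1)) = K ∙ u := by
      refine le_antisymm (fun v hv => Submodule.mem_span_singleton.2 ⟨v 0, ?_⟩)
        ((Submodule.span_singleton_le_iff_mem _ _).2 hu)
      funext k
      simp [u, apply_eq_neg_one_pow_mul_apply_zero hv k, mul_comm]
    rw [hspan, finrank_span_singleton]
    exact fun h => by simpa [u] using congrFun h 0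
  · rw [Submodule.finrank_eq_zero, Submodule.eq_bot_iff]
    intro v hv
    have h0 : v 0 = 0 := by
      have h := wrap v hv
      rw [(Nat.not_even_iff_odd.1 hev).neg_one_pow] at h
      have h2 : (2 : K) * v 0 = 0 := by linear_combination h
      exact (mul_eq_zero.1 h2).resolve_left two_ne_zero
    funext k
    simp [apply_eq_neg_one_pow_mul_apply_zero hv k, h0]

end AntiInvariants

/-- Point `k` of the cycle of `j ↦ j + p` on `ZMod N` through the class of `r` mod `Δ`. The shift
by `-Δ` makes the cycle of `Δ - 1` start at `p - 1` and end at `-1`, the point skipped by `wMap`;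
that cycle is the one that `cycleLen` shortens. -/
def cyclePoint (N p Δ r k : ℕ) : ZMod N := (k + 1) * p + r - Δ

theorem cyclePoint_succ (N p Δ r k : ℕ) :
    cyclePoint N p Δ r (k + 1) = cyclePoint N p Δ r k + p := by
  unfold cyclePoint; push_cast; ring

theorem eq_and_modEq_of_cyclePoint_eq {N p Δ x y r r' k k' : ℕ} (hp : x * Δ = p)
    (hN : (x + y) * Δ = N) (hxy : Nat.Coprime x y) (hr : r < Δ) (hr' : r' < Δ)
    (h : cyclePoint N p Δ r k = cyclePoint N p Δ r' k') : r = r' ∧ k ≡ k' [MOD x + y] := by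
  subst hp hN
  have h' : ((k * x * Δ + r : ℕ) : ZMod ((x + y) * Δ)) =
      ((k' * x * Δ + r' : ℕ) : ZMod ((x + y) * Δ)) := by
    unfold cyclePoint at h
    push_cast at h ⊢
    linear_combination h
  rw [ZMod.natCast_eq_natCast_iff] at h'
  obtain ⟨rfl, hk⟩ := Nat.ModEq.eq_and_modEq_of_mul_add hr hr' h'
  exact ⟨rfl, Nat.ModEq.cancel_right_of_coprime (Nat.coprime_self_add_left.2 hxy.symm) hk⟩

def cycleLen (Δ s : ℕ) (r : Fin Δ) : ℕ := if (r : ℕ) = Δ - 1 then s - 1 else s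

theorem cycleLen_castSucc (D s : ℕ) (r : Fin D) : cycleLen (D + 1) s r.castSucc = s :=
  if_neg (by simp [r.is_lt.ne])

theorem cycleLen_last (D s : ℕ) : cycleLen (D + 1) s (Fin.last D) = s - 1 :=
  if_pos (by simp)

theorem cycleLen_ne_zero {s : ℕ} (hs : 2 ≤ s) (Δ : ℕ) (r : Fin Δ) :
    cycleLen Δ s r ≠ 0 := by
  unfold cycleLen; split_ifs <;> omega

theorem cycleLen_le (Δ s : ℕ) (r : Fin Δ) : cycleLen Δ s r ≤ s := by
  unfold cycleLen; split_ifs <;> omega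

theorem sum_cycleLen {Δ s : ℕ} (hΔ : 0 < Δ) (hs : 0 < s) :
    ∑ r, cycleLen Δ s r = Δ * s - 1 := by
  obtain ⟨D, rfl⟩ : ∃ D, Δ = D + 1 := ⟨Δ - 1, by omega⟩
  simp only [Fin.sum_univ_castSucc, cycleLen_castSucc, cycleLen_last, Finset.sum_const,
    Finset.card_univ, Fintype.card_fin, smul_eq_mul, add_mul, one_mul]
  omega

theorem card_filter_even_cycleLen {Δ s : ℕ} (hΔ : 0 < Δ) (hs : 0 < s) :
    (Finset.univ.filter fun r => Even (cycleLen Δ s r)).card = if Even s then Δ - 1 else 1 := by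
  obtain ⟨D, rfl⟩ : ∃ D, Δ = D + 1 := ⟨Δ - 1, by omega⟩
  have hodd : Even (s - 1) ↔ ¬ Even s := by
    rw [Nat.even_sub hs]; simp
  rw [Finset.card_filter, Fin.sum_univ_castSucc]
  simp only [cycleLen_castSucc, cycleLen_last, Finset.sum_const, Finset.card_univ,
    Fintype.card_fin, smul_eq_mul, hodd]
  split_ifs <;> simp

def wMap (a c : ℕ) (i : Fin (a + 1 + c)) : Fin (a + 1 + c) :=
  if h : i.1 < c then ⟨i.1 + a + 1, by omega⟩
  else if i.1 = c then ⟨a, by omega⟩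
  else ⟨i.1 - (c + 1), (Nat.sub_le _ _).trans_lt i.2⟩

theorem wMat_apply (a c : ℕ) (i j : Fin (a + 1 + c)) :
    wMat a 1 c 1 1 1 i j = (if i = j then 1 else 0) + if j = wMap a c i then 1 else 0 := by
  rw [wMat, Matrix.add_apply, Matrix.one_apply, Matrix.of_apply, wMap]
  congr 1
  split_ifs <;> simp_all [Fin.ext_iff] <;> omega

theorem toLin'_wMat (a c : ℕ) :
    Matrix.toLin' (wMat a 1 c 1 1 1) = LinearMap.id + LinearMap.funLeft ℚ ℚ (wMap a c) := by
  refine LinearMap.ext fun v => funext fun i => ?_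
  simp [Matrix.mulVec, dotProduct, wMat_apply, add_mul, Finset.sum_add_distrib]

theorem corank_wMat_eq (a c : ℕ) :
    corank (wMat a 1 c 1 1 1) = finrank ℚ (antiInvariants ℚ (wMap a c)) := by
  rw [corank, toLin'_wMat]
  rfl

theorem wMap_natCast (a c : ℕ) (i : Fin (a + 1 + c)) :
    ((wMap a c i : ℕ) : ZMod (a + 1 + c + 1)) =
      if (i : ℕ) = c then (a : ZMod (a + 1 + c + 1)) else i + (a + 1) := by
  have hN := ZMod.natCast_self (a + 1 + c + 1)
  unfold wMap
  split_ifs with h1 h2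
  · omega
  · push_cast; ring
  · rfl
  · rw [Nat.cast_sub (by omega)]
    push_cast at hN ⊢
    linear_combination -hN

section wMapCycles

variable {a c Δ x y : ℕ} (hx : x * Δ = a + 1) (hy : y * Δ = c + 1)

include hx hy

theorem add_mul_eq_of_mul_eq : (x + y) * Δ = a + 1 + c + 1 := by
  rw [add_mul, hx, hy]; ring

theorem natCast_add_mul_eq_zero : ((x + y) * (a + 1) : ZMod (a + 1 + c + 1)) = 0 := by
  have h : (x + y) * (a + 1) = x * (a + 1 + c + 1) := by
    rw [← add_mul_eq_of_mul_eq hx hy, ← hx]; ring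
  have h0 : (((x + y) * (a + 1) : ℕ) : ZMod (a + 1 + c + 1)) = 0 := by
    rw [h, ZMod.natCast_eq_zero_iff]
    exact Dvd.intro_left _ rfl
  exact_mod_cast h0

theorem pos_and_two_le_of_mul_eq : 0 < Δ ∧ 2 ≤ x + y := by
  rcases Nat.eq_zero_or_pos Δ with h | h
  · simp [h] at hx
  · refine ⟨h, ?_⟩
    rcases Nat.eq_zero_or_pos x with h1 | h1
    · simp [h1] at hx
    rcases Nat.eq_zero_or_pos y with h2 | h2
    · simp [h2] at hy
    omega

local notation "P" => cyclePoint (a + 1 + c + 1) (a + 1) Δ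

theorem cyclePoint_pred_sub_one : P (Δ - 1) (x + y - 1) = -1 := by
  obtain ⟨hΔ, hs⟩ := pos_and_two_le_of_mul_eq hx hy
  unfold cyclePoint
  rw [Nat.cast_sub (by omega), Nat.cast_sub (by omega)]
  push_cast
  linear_combination natCast_add_mul_eq_zero hx hy

theorem cyclePoint_pred_sub_two : P (Δ - 1) (x + y - 2) = c := by
  obtain ⟨hΔ, hs⟩ := pos_and_two_le_of_mul_eq hx hy
  have hN := ZMod.natCast_self (a + 1 + c + 1)
  unfold cyclePoint
  rw [Nat.cast_sub (by omega), Nat.cast_sub (by omega)]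
  push_cast at hN ⊢
  linear_combination natCast_add_mul_eq_zero hx hy - hN

theorem cyclePoint_pred_zero : P (Δ - 1) 0 = a := by
  obtain ⟨hΔ, hs⟩ := pos_and_two_le_of_mul_eq hx hy
  unfold cyclePoint
  rw [Nat.cast_sub (by omega)]
  push_cast
  ring

theorem cyclePoint_period (r : ℕ) : P r (x + y) = P r 0 := by
  unfold cyclePoint
  push_cast
  linear_combination natCast_add_mul_eq_zero hx hy

variable (hxy : Nat.Coprime x y)
include hxy

theorem cyclePoint_ne_neg_one (r : Fin Δ) (k : Fin (cycleLen Δ (x + y) r)) : P r k ≠ -1 := by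
  obtain ⟨hΔ, hs⟩ := pos_and_two_le_of_mul_eq hx hy
  intro h
  rw [← cyclePoint_pred_sub_one hx hy] at h
  obtain ⟨hr, hk⟩ :=
    eq_and_modEq_of_cyclePoint_eq hx (add_mul_eq_of_mul_eq hx hy) hxy r.2 (by omega) h
  have hk' := hk.eq_of_lt_of_lt (k.2.trans_le (cycleLen_le _ _ r)) (by omega)
  have := k.2
  simp only [cycleLen, hr, if_true] at this
  omega

theorem cyclePoint_eq_c_iff {r k : ℕ} (hr : r < Δ) (hk : k < x + y) :
    P r k = c ↔ r = Δ - 1 ∧ k = x + y - 2 := by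
  obtain ⟨hΔ, hs⟩ := pos_and_two_le_of_mul_eq hx hy
  constructor
  · intro h
    rw [← cyclePoint_pred_sub_two hx hy] at h
    obtain ⟨hr', hk'⟩ :=
      eq_and_modEq_of_cyclePoint_eq hx (add_mul_eq_of_mul_eq hx hy) hxy hr (by omega) h
    exact ⟨hr', hk'.eq_of_lt_of_lt hk (by omega)⟩
  · rintro ⟨rfl, rfl⟩
    exact cyclePoint_pred_sub_two hx hy

theorem cyclePoint_finRotate (r : Fin Δ) (k : Fin (cycleLen Δ (x + y) r)) :
    P r (finRotate _ k) = if P r k = c then (a : ZMod (a + 1 + c + 1)) else P r k + (a + 1) := by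
  obtain ⟨hΔ, hs⟩ := pos_and_two_le_of_mul_eq hx hy
  have hk := k.2.trans_le (cycleLen_le _ _ r)
  rw [val_finRotate]
  by_cases hc : P r k = c
  · obtain ⟨hr, hk'⟩ := (cyclePoint_eq_c_iff hx hy hxy r.2 hk).1 hc
    rw [if_pos hc, if_pos (by simp only [cycleLen, hr, if_true]; omega), hr]
    exact cyclePoint_pred_zero hx hy
  · rw [if_neg hc, ← Nat.cast_succ, ← cyclePoint_succ]
    split_ifs with hlast
    · have hr : (r : ℕ) ≠ Δ - 1 := by
        intro hr
        refine hc ((cyclePoint_eq_c_iff hx hy hxy r.2 hk).2 ⟨hr, ?_⟩)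
        simp only [cycleLen, hr, if_true] at hlast
        omega
      simp only [cycleLen, hr, if_false] at hlast
      rw [hlast, cyclePoint_period hx hy]
    · rfl

theorem exists_equiv_semiconj_wMap :
    ∃ e : (Σ r : Fin Δ, Fin (cycleLen Δ (x + y) r)) ≃ Fin (a + 1 + c),
      Function.Semiconj e (Sigma.map id fun r => finRotate (cycleLen Δ (x + y) r)) (wMap a c) := by
  obtain ⟨hΔ, hs⟩ := pos_and_two_le_of_mul_eq hx hy
  let f : (Σ r : Fin Δ, Fin (cycleLen Δ (x + y) r)) → Fin (a + 1 + c) := fun i =>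
    ⟨(P i.1 i.2).val, ZMod.val_lt_of_ne_neg_one (cyclePoint_ne_neg_one hx hy hxy i.1 i.2)⟩
  have hf : ∀ i, ((f i : ℕ) : ZMod (a + 1 + c + 1)) = P i.1 i.2 :=
    fun i => ZMod.natCast_zmod_val (P i.1 i.2)
  have hinj : Function.Injective f := by
    rintro ⟨r, k⟩ ⟨r', k'⟩ h
    have h' := congrArg (fun j : Fin (a + 1 + c) => ((j : ℕ) : ZMod (a + 1 + c + 1))) h
    simp only [hf] at h'
    obtain ⟨hr, hk⟩ :=
      eq_and_modEq_of_cyclePoint_eq hx (add_mul_eq_of_mul_eq hx hy) hxy r.2 r'.2 h'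
    obtain rfl := Fin.ext hr
    obtain rfl := Fin.ext (hk.eq_of_lt_of_lt (k.2.trans_le (cycleLen_le _ _ r))
      (k'.2.trans_le (cycleLen_le _ _ r)))
    rfl
  have hcard : Fintype.card (Σ r : Fin Δ, Fin (cycleLen Δ (x + y) r)) = a + 1 + c := by
    rw [Fintype.card_sigma]
    simp only [Fintype.card_fin]
    rw [sum_cycleLen hΔ (by omega), mul_comm, add_mul_eq_of_mul_eq hx hy]
    rfl
  refine ⟨Equiv.ofBijective f ((Fintype.bijective_iff_injective_and_card f).2
    ⟨hinj, by rw [hcard, Fintype.card_fin]⟩), ?_⟩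
  rintro ⟨r, k⟩
  have hc : P r k = c ↔ (f ⟨r, k⟩ : ℕ) = c := by
    rw [← hf ⟨r, k⟩]
    exact ⟨Nat.eq_of_natCast_zmod_eq (by omega) (by omega), fun h => by rw [h]⟩
  refine Fin.ext (Nat.eq_of_natCast_zmod_eq (N := a + 1 + c + 1) (by omega) (by omega) ?_)
  change (((f ⟨r, finRotate _ k⟩ : Fin _) : ℕ) : ZMod (a + 1 + c + 1)) =
    (((wMap a c (f ⟨r, k⟩) : Fin _) : ℕ) : ZMod (a + 1 + c + 1))
  rw [hf, wMap_natCast, hf, cyclePoint_finRotate hx hy hxy]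
  exact if_congr hc rfl rfl

end wMapCycles

theorem corank_wMat_b_one_general (a c : ℕ) :
    corank (wMat a 1 c 1 1 1) =
      if ((a + 1) / Nat.gcd (a + 1) (c + 1) + (c + 1) / Nat.gcd (a + 1) (c + 1)) % 2 = 0
      then Nat.gcd (a + 1) (c + 1) - 1
      else 1 := by
  set Δ := Nat.gcd (a + 1) (c + 1)
  have hx : (a + 1) / Δ * Δ = a + 1 := Nat.div_mul_cancel (Nat.gcd_dvd_left _ _)
  have hy : (c + 1) / Δ * Δ = c + 1 := Nat.div_mul_cancel (Nat.gcd_dvd_right _ _)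
  have hxy := Nat.coprime_div_gcd_div_gcd (Nat.gcd_pos_of_pos_left (c + 1) (Nat.succ_pos a))
  obtain ⟨hΔ, hs⟩ := pos_and_two_le_of_mul_eq hx hy
  obtain ⟨e, he⟩ := exists_equiv_semiconj_wMap hx hy hxy
  rw [corank_wMat_eq, finrank_antiInvariants_of_semiconj e he, finrank_antiInvariants_sigma]
  simp only [finrank_antiInvariants_finRotate (cycleLen_ne_zero hs _ _)]
  rw [Finset.sum_boole, card_filter_even_cycleLen hΔ (by omega)]
  simp only [Nat.cast_id, Nat.even_iff]

/-- For `a, c ≥ 1`, the corank of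
`M = I_{a+1+c} + [[0,0,I_c],[0,I_1,0],[I_a,0,0]]` is `Δ − 1` if `x + y` is even
and `1` if `x + y` is odd, where `p = a+1`, `q = c+1`, `Δ = gcd(p,q)`,
`p = xΔ`, `q = yΔ`. -/
theorem corank_wMat_b_one (a c : ℕ) (ha : 1 ≤ a) (hc : 1 ≤ c) :
    corank (wMat a 1 c 1 1 1) =
      if ((a + 1) / Nat.gcd (a + 1) (c + 1) + (c + 1) / Nat.gcd (a + 1) (c + 1)) % 2 = 0
      then Nat.gcd (a + 1) (c + 1) - 1
      else 1 :=
  corank_wMat_b_one_general a c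

end
end

section
/- For integers a,b ≥ 2, let M = I_{a+b−1} + P where P is the block antidiagonal matrix [[0,0,I_{b−1}],[0,I_1,0],[I_{a−1},0,0]] with blocks I_{b−1}, I_1, I_{a−1} (block sizes b−1, 1, a−1). Let p = a, q = b, Δ = gcd(a,b), p = xΔ, q = yΔ. Then corank(M) = Δ − 1 if x+y is even and 1 if x+y is odd. -/
noncomputable section

section AuxiliaryForStatement14

lemma modeq_eq_of_lt {x y n : ℕ} (h : x ≡ y [MOD n]) (hx : x < n) (hy : y < n) : x = y := by
  rw [Nat.ModEq, Nat.mod_eq_of_lt hx, Nat.mod_eq_of_lt hy] at h; exact h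

lemma mod_pred {Δ c : ℕ} (hΔ : 0 < Δ) (hc : Δ ∣ c) (h0 : 0 < c) : (c - 1) % Δ = Δ - 1 := by
  obtain ⟨y, rfl⟩ := hc
  rcases y with _|y
  · simp at h0
  · have h1 : Δ * (y+1) - 1 = Δ * y + (Δ - 1) := by
      have h2 : Δ * (y+1) = Δ * y + Δ := by ring
      omega
    rw [h1, Nat.mul_add_mod, Nat.mod_eq_of_lt (by omega)]

lemma dvd_succ_of_mod_pred {Δ j : ℕ} (hΔ : 0 < Δ) (h : j % Δ = Δ - 1) : Δ ∣ j + 1 :=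
  ⟨j / Δ + 1, by have h0 := Nat.div_add_mod j Δ; rw [Nat.mul_add, Nat.mul_one]; omega⟩

lemma neg_one_pow_eq {p q : ℕ} (h : p % 2 = q % 2) : ((-1:ℚ))^p = (-1)^q := by
  rcases Nat.even_or_odd p with hp|hp
  · have hq : Even q := by rw [Nat.even_iff] at hp ⊢; omega
    rw [hp.neg_one_pow, hq.neg_one_pow]
  · have hq : Odd q := by rw [Nat.odd_iff] at hp ⊢; omega
    rw [hp.neg_one_pow, hq.neg_one_pow]

lemma neg_one_pow_flip {p q : ℕ} (h : p % 2 ≠ q % 2) : ((-1:ℚ))^p = -(-1)^q := by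
  rcases Nat.even_or_odd p with hp|hp
  · have hq : Odd q := by rw [Nat.even_iff] at hp; rw [Nat.odd_iff]; omega
    rw [hp.neg_one_pow, hq.neg_one_pow, neg_neg]
  · have hq : Even q := by rw [Nat.odd_iff] at hp; rw [Nat.even_iff]; omega
    rw [hp.neg_one_pow, hq.neg_one_pow]

lemma kerDim {n d : ℕ} (T : (Fin n → ℚ) →ₗ[ℚ] Fin n → ℚ)
    (E : (Fin d → ℚ) →ₗ[ℚ] Fin n → ℚ) (emb : Fin d → Fin n)
    (hE : ∀ c, T (E c) = 0) (hEe : ∀ c t, E c (emb t) = c t)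
    (hdet : ∀ x, T x = 0 → (∀ t, x (emb t) = 0) → x = 0) :
    Module.finrank ℚ (LinearMap.ker T) = d := by
  have hbij : Function.Bijective ((LinearMap.funLeft ℚ ℚ emb).comp (LinearMap.ker T).subtype) := by
    constructor
    · intro x y hxy
      apply Subtype.ext
      have hx : T x.1 = 0 := LinearMap.mem_ker.mp x.2
      have hy : T y.1 = 0 := LinearMap.mem_ker.mp y.2
      have h0 : x.1 - y.1 = 0 := by
        apply hdet _ (by rw [map_sub, hx, hy, sub_zero])
        intro t
        have ht := congrFun hxy t
        simp only [LinearMap.comp_apply, LinearMap.funLeft_apply, Submodule.coe_subtype] at ht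
        simp [ht]
      rwa [sub_eq_zero] at h0
    · intro c
      exact ⟨⟨E c, LinearMap.mem_ker.mpr (hE c)⟩, by
        funext t
        simp only [LinearMap.comp_apply, LinearMap.funLeft_apply, Submodule.coe_subtype]
        exact hEe c t⟩
  rw [(LinearEquiv.ofBijective _ hbij).finrank_eq, Module.finrank_fin_fun]

def fval (a b j : ℕ) : ℕ := if j < b - 1 then j + a else if j = b - 1 then a - 1 else j - b

def Ff (a b : ℕ) (i : Fin (a-1+1+(b-1))) : Fin (a-1+1+(b-1)) :=
  ⟨fval a b i.1, by have := i.2; unfold fval; split_ifs <;> omega⟩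

def EevenL (n Δ : ℕ) : (Fin (Δ-1) → ℚ) →ₗ[ℚ] (Fin n → ℚ) where
  toFun c := fun j => if h : j.1 % Δ < Δ - 1 then (-1:ℚ)^(j.1/Δ) * c ⟨j.1 % Δ, h⟩ else 0
  map_add' c₁ c₂ := by
    funext j; by_cases h : j.1 % Δ < Δ - 1 <;> simp [h] <;> ring
  map_smul' r c := by
    funext j; by_cases h : j.1 % Δ < Δ - 1 <;> simp [h] <;> ring

def EoddL (n Δ : ℕ) (s : ℕ → ℚ) : (Fin 1 → ℚ) →ₗ[ℚ] (Fin n → ℚ) where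
  toFun c := fun j => if j.1 % Δ = Δ - 1 then s j.1 * c 0 else 0
  map_add' c₁ c₂ := by
    funext j; by_cases h : j.1 % Δ = Δ - 1 <;> simp [h] <;> ring
  map_smul' r c := by
    funext j; by_cases h : j.1 % Δ = Δ - 1 <;> simp [h] <;> ring

lemma mulVec_indicator {n : ℕ} (Q : Matrix (Fin n) (Fin n) ℚ) (g : Fin n → Fin n)
    (hQ : ∀ i j, Q i j = if j = g i then 1 else 0) (x : Fin n → ℚ) (i : Fin n) :
    Q.mulVec x i = x (g i) := by
  simp [Matrix.mulVec, dotProduct, hQ, ite_mul, Finset.sum_ite_eq']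


end AuxiliaryForStatement14

lemma EevenL_apply (n Δ : ℕ) (c : Fin (Δ-1) → ℚ) (j : Fin n) :
    EevenL n Δ c j = if h : j.1 % Δ < Δ - 1 then (-1:ℚ)^(j.1/Δ) * c ⟨j.1 % Δ, h⟩ else 0 := rfl

lemma EoddL_apply (n Δ : ℕ) (s : ℕ → ℚ) (c : Fin 1 → ℚ) (j : Fin n) :
    EoddL n Δ s c j = if j.1 % Δ = Δ - 1 then s j.1 * c 0 else 0 := rfl

lemma wMat_mulVec (a b : ℕ) (ha : 2 ≤ a) (hb : 2 ≤ b) (x : Fin (a-1+1+(b-1)) → ℚ)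
    (i : Fin (a-1+1+(b-1))) :
    (wMat (a-1) 1 (b-1) 1 1 1).mulVec x i = x i + x (Ff a b i) := by
  have hQ : ∀ i j : Fin (a-1+1+(b-1)),
      (Matrix.of (fun i j : Fin ((a-1)+1+(b-1)) =>
        if i.1 < (b-1) ∧ j.1 = i.1 + (a-1) + 1 then (1:ℚ)
        else if (b-1) ≤ i.1 ∧ i.1 < (b-1) + 1 ∧ j.1 + (b-1) = i.1 + (a-1) then 1
        else if (b-1) + 1 ≤ i.1 ∧ j.1 + (b-1) + 1 = i.1 then 1 else 0)) i j
      = if j = Ff a b i then 1 else 0 := by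
    intro i j
    rcases i with ⟨i, hi⟩; rcases j with ⟨j, hj⟩
    simp only [Matrix.of_apply, Ff, fval, Fin.mk.injEq]
    split_ifs <;> first | rfl | omega
  show (wMat (a-1) 1 (b-1) 1 1 1).mulVec x i = _
  unfold wMat
  rw [Matrix.add_mulVec, Matrix.one_mulVec, Pi.add_apply]
  rw [mulVec_indicator _ (Ff a b) hQ x i]

set_option maxHeartbeats 2000000 in
/-- For `a, b ≥ 2`, the corank of the `(a+b−1) × (a+b−1)` matrix
`M = I_{a+b−1} + P`, where `P` has identity blocks `I_{b−1}` (top-right), `I_1`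
(middle) and `I_{a−1}` (bottom-left) with respect to the block decomposition
`(b−1, 1, a−1)`, equals `Δ − 1` if `x + y` is even and `1` if `x + y` is odd,
where `Δ = gcd(a,b)`, `a = xΔ`, `b = yΔ`. -/
theorem corank_wMat_quantized_matrix_algebra (a b : ℕ) (ha : 2 ≤ a) (hb : 2 ≤ b) :
    corank (wMat (a - 1) 1 (b - 1) 1 1 1) =
      if (a / Nat.gcd a b + b / Nat.gcd a b) % 2 = 0
      then Nat.gcd a b - 1
      else 1 := by
  classical
  set Δ := Nat.gcd a b with hΔdef
  have hΔa : Δ ∣ a := Nat.gcd_dvd_left a b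
  have hΔb : Δ ∣ b := Nat.gcd_dvd_right a b
  have hΔab : Δ ∣ a + b := Dvd.dvd.add hΔa hΔb
  have hΔpos : 0 < Δ := Nat.gcd_pos_of_pos_left _ (by omega)
  have hΔlea : Δ ≤ a := Nat.le_of_dvd (by omega) hΔa
  have hΔleb : Δ ≤ b := Nat.le_of_dvd (by omega) hΔb
  set X := a / Δ with hXdef
  set Y := b / Δ with hYdef
  have hax : Δ * X = a := Nat.mul_div_cancel' hΔa
  have hbY : Δ * Y = b := Nat.mul_div_cancel' hΔb
  have hXY : Nat.Coprime X Y := Nat.coprime_div_gcd_div_gcd hΔpos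
  have hX1 : 1 ≤ X := (Nat.one_le_div_iff hΔpos).mpr hΔlea
  have hY1 : 1 ≤ Y := (Nat.one_le_div_iff hΔpos).mpr hΔleb
  set m := X + Y with hmdef
  have hm2 : 2 ≤ m := by omega
  have hN : Δ * m = a + b := by rw [hmdef, Nat.mul_add, hax, hbY]
  have hkey : Y * a = X * b := by rw [← hax, ← hbY]; ring
  have hXm : Nat.Coprime X m := by
    rw [hmdef, add_comm]
    exact (Nat.coprime_add_self_right).mpr hXY
  set u := X ^ (m.totient - 1) with hudef
  have htot : 0 < m.totient := Nat.totient_pos.mpr (by omega)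
  have hux : X * u ≡ 1 [MOD m] := by
    have h1 : X * u = X ^ m.totient := by
      rw [hudef, ← pow_succ']
      congr 1
      omega
    rw [h1]
    exact Nat.ModEq.pow_totient hXm
  have huy : u * Y ≡ m - 1 [MOD m] := by
    have h1 : u * Y + X * u ≡ 0 [MOD m] := by
      have e : u * Y + X * u = m * u := by rw [hmdef]; ring
      rw [e]
      exact (Nat.modEq_zero_iff_dvd).mpr ⟨u, rfl⟩
    have h2 : u * Y + 1 ≡ (m - 1) + 1 [MOD m] := by
      have h3 : u * Y + 1 ≡ u * Y + X * u [MOD m] := (Nat.ModEq.add_left _ hux).symm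
      have h4 : (0:ℕ) ≡ (m-1) + 1 [MOD m] := by
        have : (m - 1) + 1 = m := by omega
        rw [this]
        exact ((Nat.modEq_zero_iff_dvd).mpr dvd_rfl).symm
      exact (h3.trans h1).trans h4
    exact Nat.ModEq.add_right_cancel' 1 h2
  -- basic facts about fval / Ff
  have hF1 : ∀ j : ℕ, j ≠ b - 1 → j < a + b → fval a b j = (j + a) % (a + b) := by
    intro j hne hlt
    unfold fval
    split_ifs with h1
    · exact (Nat.mod_eq_of_lt (show j + a < a + b by omega)).symm
    · have e : j + a = (j - b) + 1 * (a + b) := by omega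
      rw [e, Nat.add_mul_mod_self_right]
      exact (Nat.mod_eq_of_lt (show j - b < a + b by omega)).symm
  have hFb : fval a b (b-1) = a - 1 := by
    unfold fval; split_ifs <;> omega
  have hsb : (b-1) % Δ = Δ - 1 := mod_pred hΔpos hΔb (by omega)
  have hsa : (a-1) % Δ = Δ - 1 := mod_pred hΔpos hΔa (by omega)
  have hmodΔ : ∀ j : ℕ, ((j + a) % (a+b)) % Δ = j % Δ := by
    intro j
    rw [Nat.mod_mod_of_dvd _ hΔab, ← hax, Nat.add_mul_mod_self_left]
  have hFfval : ∀ i : Fin (a-1+1+(b-1)), (Ff a b i).1 = fval a b i.1 := fun _ => rfl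
  have hmodk : ∀ jv k : ℕ, ((jv + k * a) % (a + b)) % Δ = jv % Δ := by
    intro jv k
    rw [Nat.mod_mod_of_dvd _ hΔab, ← hax]
    have e : k * (Δ * X) = Δ * (k * X) := by ring
    rw [e, Nat.add_mul_mod_self_left]
  have hFres : ∀ i : Fin (a-1+1+(b-1)), (Ff a b i).1 % Δ = i.1 % Δ := by
    intro i
    rw [hFfval]
    by_cases hbi : i.1 = b-1
    · rw [hbi, hFb, hsa, hsb]
    · rw [hF1 _ hbi (by have := i.2; omega)]
      exact hmodΔ i.1
  -- iterate formula on non-special orbits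
  have hIter1 : ∀ (j : Fin (a-1+1+(b-1))), j.1 % Δ ≠ Δ - 1 →
      ∀ k : ℕ, ((Ff a b)^[k] j).1 = (j.1 + k * a) % (a + b) := by
    intro j hj k
    induction k with
    | zero =>
      simp only [Function.iterate_zero, id_eq, Nat.zero_mul, Nat.add_zero]
      exact (Nat.mod_eq_of_lt (by have := j.2; omega)).symm
    | succ k ih =>
      have hres : ((j.1 + k * a) % (a + b)) % Δ = j.1 % Δ := hmodk j.1 k
      have hlt2 : (j.1 + k * a) % (a + b) < a + b := Nat.mod_lt _ (by omega)
      have hne : (j.1 + k * a) % (a + b) ≠ b - 1 := by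
        intro hEq
        apply hj
        rw [← hres, hEq, hsb]
      have hstep2 : ((Ff a b)^[k+1] j).1 = fval a b ((Ff a b)^[k] j).1 := by
        rw [Function.iterate_succ_apply']
        rfl
      rw [hstep2, ih, hF1 _ hne hlt2, Nat.mod_add_mod]
      congr 1
      have e2 : (k+1) * a = k * a + a := by ring
      omega
  set A1 : Fin (a-1+1+(b-1)) := ⟨a-1, by omega⟩ with hA1def
  -- iterate formula on the special orbit, starting from a-1
  have hIter2 : ∀ k : ℕ, k ≤ m - 2 → ((Ff a b)^[k] A1).1 = (a - 1 + k * a) % (a + b) := by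
    intro k
    induction k with
    | zero =>
      intro _
      show (a - 1 : ℕ) = (a - 1 + 0 * a) % (a + b)
      rw [Nat.zero_mul, Nat.add_zero]
      exact (Nat.mod_eq_of_lt (show a - 1 < a + b by omega)).symm
    | succ k ih =>
      intro hk
      have hstep2 : ((Ff a b)^[k+1] A1).1 = fval a b ((Ff a b)^[k] A1).1 := by
        rw [Function.iterate_succ_apply']
        rfl
      rw [hstep2, ih (by omega)]
      have hvlt : (a - 1 + k * a) % (a + b) < a + b := Nat.mod_lt _ (by omega)
      have hvne : (a - 1 + k * a) % (a + b) ≠ b - 1 := by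
        intro hEq
        have h1 : (a - 1 + k*a) % (a+b) ≡ a - 1 + k*a [MOD a+b] := Nat.mod_modEq _ _
        rw [hEq] at h1
        have h3 := h1.add_right 1
        have e1 : b - 1 + 1 = b := by omega
        have e2 : a - 1 + k*a + 1 = a + k*a := by
          have : 1 ≤ a := by omega
          omega
        rw [e1, e2] at h3
        have h4 : Δ * Y ≡ Δ * ((k+1) * X) [MOD Δ * m] := by
          have e3 : a + k * a = Δ * ((k+1)*X) := by rw [← hax]; ring
          rw [hN, hbY, ← e3]
          exact h3
        have h5 : Y ≡ (k+1) * X [MOD m] := Nat.ModEq.mul_left_cancel' (by omega) h4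
        have h6 : u * Y ≡ k + 1 [MOD m] := by
          have h7 := h5.mul_left u
          have e4 : u * ((k+1)*X) = (X * u) * (k+1) := by ring
          rw [e4] at h7
          have h8 := hux.mul_right (k+1)
          rw [one_mul] at h8
          exact h7.trans h8
        have h9 : (m - 1 : ℕ) ≡ k + 1 [MOD m] := huy.symm.trans h6
        have := modeq_eq_of_lt h9 (by omega) (by omega)
        omega
      rw [hF1 _ hvne hvlt, Nat.mod_add_mod]
      congr 1
      have e2 : (k+1) * a = k * a + a := by ring
      omega
  -- sign propagation along kernel
  have hsign : ∀ x : Fin (a-1+1+(b-1)) → ℚ, (∀ i, x (Ff a b i) = - x i) →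
      ∀ (k : ℕ) (j), x ((Ff a b)^[k] j) = (-1:ℚ)^k * x j := by
    intro x hx k j
    induction k with
    | zero => simp
    | succ k ih => rw [Function.iterate_succ_apply', hx, ih, pow_succ]; ring
  -- the discrete-log function on the special orbit
  set L : ℕ → ℕ := fun j => (u * ((j+1)/Δ) + (m-1)) % m with hLdef
  have hq : ∀ j : ℕ, j % Δ = Δ-1 → Δ * ((j+1)/Δ) = j + 1 :=
    fun j hj => Nat.mul_div_cancel' (dvd_succ_of_mod_pred hΔpos hj)
  have hLlt : ∀ j, L j < m := fun j => Nat.mod_lt _ (by omega)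
  have hLmod : ∀ j : ℕ, L j + 1 ≡ u * ((j+1)/Δ) [MOD m] := by
    intro j
    have h1 : L j ≡ u * ((j+1)/Δ) + (m-1) [MOD m] := by
      rw [hLdef]
      exact Nat.mod_modEq _ _
    have h2 := h1.add_right 1
    have e : u * ((j+1)/Δ) + (m-1) + 1 = u * ((j+1)/Δ) + m := by omega
    rw [e] at h2
    have h3 : u * ((j+1)/Δ) + m ≡ u * ((j+1)/Δ) + 0 [MOD m] :=
      Nat.ModEq.add_left _ ((Nat.modEq_zero_iff_dvd).mpr dvd_rfl)
    rw [Nat.add_zero] at h3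
    exact h2.trans h3
  have hq_lb : ∀ j : ℕ, j % Δ = Δ-1 → 1 ≤ (j+1)/Δ := by
    intro j hj
    have h0 := hq j hj
    have : j % Δ ≤ j := Nat.mod_le _ _
    rcases Nat.eq_zero_or_pos ((j+1)/Δ) with h|h
    · rw [h, Nat.mul_zero] at h0; omega
    · exact h
  have hq_ub : ∀ j : ℕ, j < a + b - 1 → j % Δ = Δ-1 → (j+1)/Δ < m := by
    intro j hjlt hj
    have h0 := hq j hj
    by_contra hcon
    push_neg at hcon
    have : Δ * m ≤ Δ * ((j+1)/Δ) := Nat.mul_le_mul_left _ hcon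
    omega
  have hLrange : ∀ j : ℕ, j < a + b - 1 → j % Δ = Δ-1 → L j < m - 1 := by
    intro j hjlt hj
    by_contra hcon
    push_neg at hcon
    have hLeq : L j = m - 1 := by have := hLlt j; omega
    have h1 : (m : ℕ) ≡ u * ((j+1)/Δ) [MOD m] := by
      have := hLmod j
      rw [hLeq] at this
      have e : m - 1 + 1 = m := by omega
      rw [e] at this
      exact this
    have h2 : u * ((j+1)/Δ) ≡ 0 [MOD m] :=
      h1.symm.trans ((Nat.modEq_zero_iff_dvd).mpr dvd_rfl)
    have h3 : (j+1)/Δ ≡ 0 [MOD m] := by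
      have h4 := h2.mul_left X
      rw [Nat.mul_zero] at h4
      have e : X * (u * ((j+1)/Δ)) = (X * u) * ((j+1)/Δ) := by ring
      rw [e] at h4
      have h5 := hux.mul_right ((j+1)/Δ)
      rw [one_mul] at h5
      exact h5.symm.trans h4
    have h6 : m ∣ (j+1)/Δ := (Nat.modEq_zero_iff_dvd).mp h3
    have h7 := hq_lb j hj
    have h8 := hq_ub j hjlt hj
    have := Nat.le_of_dvd (by omega) h6
    omega
  have hLkey : ∀ j : ℕ, j < a + b - 1 → j % Δ = Δ-1 → (a - 1 + L j * a) % (a+b) = j := by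
    intro j hjlt hj
    have h1 : (L j + 1) * X ≡ (j+1)/Δ [MOD m] := by
      have h2 := (hLmod j).mul_right X
      have e : u * ((j+1)/Δ) * X = (X * u) * ((j+1)/Δ) := by ring
      rw [e] at h2
      have h3 := hux.mul_right ((j+1)/Δ)
      rw [one_mul] at h3
      exact h2.trans h3
    have h4 : Δ * ((L j + 1) * X) ≡ Δ * ((j+1)/Δ) [MOD Δ * m] := h1.mul_left' Δ
    rw [hq j hj, hN] at h4
    have e5 : Δ * ((L j + 1) * X) = (L j + 1) * a := by rw [← hax]; ring
    rw [e5] at h4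
    have e6 : (L j + 1) * a = (a - 1 + L j * a) + 1 := by
      have e7 : (L j + 1) * a = L j * a + a := by ring
      omega
    rw [e6] at h4
    have h8 := Nat.ModEq.add_right_cancel' 1 h4
    rw [Nat.ModEq] at h8
    rw [h8, Nat.mod_eq_of_lt (by omega)]
  have hA1j : ∀ j : Fin (a-1+1+(b-1)), j.1 % Δ = Δ-1 → (Ff a b)^[L j.1] A1 = j := by
    intro j hj
    have hjlt : j.1 < a + b - 1 := by have := j.2; omega
    apply Fin.ext
    rw [hIter2 (L j.1) (by have := hLrange j.1 hjlt hj; omega)]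
    exact hLkey j.1 hjlt hj
  have hLa : L (a-1) = 0 := by
    rw [hLdef]
    simp only []
    have e1 : a - 1 + 1 = a := by omega
    rw [e1]
    have e2 : a / Δ = X := hXdef.symm
    rw [e2]
    have h1 : (X * u) % m = 1 := by
      have := hux
      rw [Nat.ModEq, Nat.mod_eq_of_lt (by omega : (1:ℕ) < m)] at this
      exact this
    have h0 := Nat.div_add_mod (X * u) m
    have e3 : u * X + (m - 1) = m * ((X*u)/m) + m := by
      have e4 : u * X = X * u := by ring
      omega
    rw [e3]
    have e5 : m * ((X*u)/m) + m = m * ((X*u)/m + 1) := by ring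
    rw [e5, Nat.mul_mod_right]
  have hLb : L (b-1) = m - 2 := by
    rw [hLdef]
    simp only []
    have e1 : b - 1 + 1 = b := by omega
    rw [e1]
    have e2 : b / Δ = Y := hYdef.symm
    rw [e2]
    have h1 : (u * Y) % m = m - 1 := by
      have := huy
      rw [Nat.ModEq, Nat.mod_eq_of_lt (by omega : m - 1 < m)] at this
      exact this
    have h0 := Nat.div_add_mod (u * Y) m
    have e3 : u * Y + (m - 1) = m * ((u*Y)/m + 1) + (m - 2) := by
      have e5 : m * ((u*Y)/m + 1) = m * ((u*Y)/m) + m := by ring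
      omega
    rw [e3, Nat.mul_add_mod, Nat.mod_eq_of_lt (by omega)]
  have hstep : ∀ j : Fin (a-1+1+(b-1)), j.1 % Δ = Δ-1 → j.1 ≠ b - 1 →
      L ((Ff a b j).1) = L j.1 + 1 := by
    intro j hj hjb
    have hjlt : j.1 < a + b - 1 := by have := j.2; omega
    have hFv : (Ff a b j).1 = (j.1 + a) % (a + b) := by
      rw [hFfval, hF1 _ hjb (by omega)]
    have hs : (Ff a b j).1 % Δ = Δ - 1 := by rw [hFres]; exact hj
    -- q' ≡ q + X mod m
    have hq1 : Δ * (((Ff a b j).1 + 1)/Δ) = (Ff a b j).1 + 1 := hq _ hs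
    have hq2 : Δ * ((j.1+1)/Δ) = j.1 + 1 := hq _ hj
    have h1 : (Ff a b j).1 + 1 ≡ (j.1 + 1) + a [MOD a + b] := by
      rw [hFv]
      have h2 := (Nat.mod_modEq (j.1 + a) (a+b)).add_right 1
      have e : j.1 + a + 1 = (j.1 + 1) + a := by omega
      rw [e] at h2
      exact h2
    have h3 : Δ * (((Ff a b j).1 + 1)/Δ) ≡ Δ * ((j.1+1)/Δ + X) [MOD Δ * m] := by
      rw [hq1, hN, Nat.mul_add, hq2, hax]
      exact h1
    have h4 : ((Ff a b j).1 + 1)/Δ ≡ (j.1+1)/Δ + X [MOD m] :=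
      Nat.ModEq.mul_left_cancel' (by omega) h3
    have h5 : L ((Ff a b j).1) ≡ L j.1 + 1 [MOD m] := by
      have h6 : L ((Ff a b j).1) ≡ u * (((Ff a b j).1 + 1)/Δ) + (m-1) [MOD m] := by
        rw [hLdef]; exact Nat.mod_modEq _ _
      have h7 := (h4.mul_left u).add_right (m-1)
      have h8 : u * ((j.1+1)/Δ + X) + (m-1) = (u * ((j.1+1)/Δ) + (m-1)) + X * u := by ring
      rw [h8] at h7
      have h9 := (hux.add_left (u * ((j.1+1)/Δ) + (m-1)))
      have h10 : L j.1 ≡ u * ((j.1+1)/Δ) + (m-1) [MOD m] := by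
        rw [hLdef]; exact Nat.mod_modEq _ _
      exact ((h6.trans h7).trans h9).trans (h10.symm.add_right 1)
    have hlt1 : L ((Ff a b j).1) < m := hLlt _
    have hlt2 : L j.1 + 1 < m := by have := hLrange j.1 hjlt hj; omega
    exact modeq_eq_of_lt h5 hlt1 hlt2
  -- kernel membership characterization
  have hmulL : ∀ (x : Fin (a-1+1+(b-1)) → ℚ) i,
      Matrix.toLin' (wMat (a-1) 1 (b-1) 1 1 1) x i = x i + x (Ff a b i) := by
    intro x i
    rw [Matrix.toLin'_apply]
    exact wMat_mulVec a b ha hb x i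
  have hkerIff : ∀ x, Matrix.toLin' (wMat (a-1) 1 (b-1) 1 1 1) x = 0 ↔
      ∀ i, x (Ff a b i) = - x i := by
    intro x
    constructor
    · intro h i
      have h2 := congrFun h i
      rw [hmulL] at h2
      have h0 : x i + x (Ff a b i) = 0 := by simpa using h2
      linarith
    · intro h
      funext i
      rw [hmulL, h i]
      simp
  unfold corank
  rcases Nat.mod_two_eq_zero_or_one m with hme|hmo
  · -- EVEN CASE
    rw [if_pos hme]
    have hXodd : X % 2 = 1 := by
      rcases Nat.mod_two_eq_zero_or_one X with hX0|hX1'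
      · exfalso
        have hY0 : Y % 2 = 0 := by omega
        have hdvd := Nat.dvd_gcd (Nat.dvd_of_mod_eq_zero hX0) (Nat.dvd_of_mod_eq_zero hY0)
        rw [Nat.Coprime.gcd_eq_one hXY] at hdvd
        omega
      · exact hX1'
    have hqflip : ∀ j : Fin (a-1+1+(b-1)), j.1 % Δ ≠ Δ - 1 →
        (((j.1 + a) % (a+b)) / Δ) % 2 ≠ (j.1 / Δ) % 2 := by
      intro j hj
      have h2 : Δ * (((j.1+a)%(a+b)) / Δ) + j.1 % Δ = (j.1+a)%(a+b) := by
        have h2a := Nat.div_add_mod ((j.1+a)%(a+b)) Δ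
        rw [hmodΔ] at h2a
        exact h2a
      have h3 : Δ * (j.1 / Δ) + j.1 % Δ = j.1 := Nat.div_add_mod _ _
      have h1 : Δ * (((j.1+a)%(a+b))/Δ) + j.1 % Δ ≡ Δ * (j.1/Δ + X) + j.1 % Δ [MOD Δ * m] := by
        rw [h2, hN]
        have e : Δ * (j.1/Δ + X) + j.1 % Δ = j.1 + a := by
          rw [Nat.mul_add, hax]
          omega
        rw [e]
        exact Nat.mod_modEq _ _
      have h4 := Nat.ModEq.add_right_cancel' _ h1
      have h5 := Nat.ModEq.mul_left_cancel' (show Δ ≠ 0 by omega) h4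
      have h6 := Nat.ModEq.of_dvd (Nat.dvd_of_mod_eq_zero hme) h5
      rw [Nat.ModEq] at h6
      omega
    refine kerDim _ (EevenL (a-1+1+(b-1)) Δ)
      (fun t => ⟨t.1, by have := t.2; omega⟩) ?_ ?_ ?_
    · -- E c in kernel
      intro c
      rw [hkerIff]
      intro i
      by_cases hsp : i.1 % Δ = Δ - 1
      · have h1 : ¬ (i.1 % Δ < Δ - 1) := by omega
        have h2 : ¬ ((Ff a b i).1 % Δ < Δ - 1) := by rw [hFres]; omega
        rw [EevenL_apply, EevenL_apply, dif_neg h2, dif_neg h1, neg_zero]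
      · have hlt : i.1 % Δ < Δ - 1 := by
          have : i.1 % Δ < Δ := Nat.mod_lt _ (by omega)
          omega
        have hlt2 : (Ff a b i).1 % Δ < Δ - 1 := by rw [hFres]; exact hlt
        rw [EevenL_apply, EevenL_apply, dif_pos hlt2, dif_pos hlt]
        have hidx : (⟨(Ff a b i).1 % Δ, hlt2⟩ : Fin (Δ-1)) = ⟨i.1 % Δ, hlt⟩ :=
          Fin.ext (hFres i)
        rw [hidx]
        have hib : i.1 ≠ b - 1 := by
          intro hEq
          apply hsp
          rw [hEq, hsb]
        have hFv : (Ff a b i).1 = (i.1 + a) % (a+b) := by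
          rw [hFfval, hF1 _ hib (by have := i.2; omega)]
        rw [hFv, neg_one_pow_flip (hqflip i hsp)]
        ring
    · -- evaluation at representatives
      intro c t
      rw [EevenL_apply]
      have hmodt : (t.1 : ℕ) % Δ = t.1 := Nat.mod_eq_of_lt (by have := t.2; omega)
      have hcond : (t.1 : ℕ) % Δ < Δ - 1 := by rw [hmodt]; exact t.2
      rw [dif_pos hcond]
      have hdiv : (t.1 : ℕ) / Δ = 0 := Nat.div_eq_of_lt (by have := t.2; omega)
      rw [hdiv, pow_zero, one_mul]
      congr 1
      exact Fin.ext hmodt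
    · -- determination
      intro x hx0 hxe
      have hxrel : ∀ i, x (Ff a b i) = - x i := (hkerIff x).mp hx0
      have hxA1 : x A1 = 0 := by
        have hFm2 : ((Ff a b)^[m-2] A1).1 = b - 1 := by
          rw [hIter2 (m-2) le_rfl]
          obtain ⟨X', hX'⟩ : ∃ X', X = X' + 1 := ⟨X-1, by omega⟩
          obtain ⟨Y', hY'⟩ : ∃ Y', Y = Y' + 1 := ⟨Y-1, by omega⟩
          have hkey' : Y' * a + a = X' * b + b := by
            have hk2 := hkey
            rw [hX', hY'] at hk2
            have e1 : (Y'+1)*a = Y'*a + a := by ring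
            have e2 : (X'+1)*b = X'*b + b := by ring
            omega
          have hma : (m-2) * a = X' * a + Y' * a := by
            have e : m - 2 = X' + Y' := by omega
            rw [e, Nat.add_mul]
          have hXab : X' * (a+b) = X' * a + X' * b := by ring
          have heq : a - 1 + (m-2)*a = X' * (a+b) + (b-1) := by omega
          rw [heq]
          have e2 : X' * (a+b) + (b-1) = (b-1) + (a+b) * X' := by ring
          rw [e2, Nat.add_mul_mod_self_left, Nat.mod_eq_of_lt (by omega)]
        have hFm1 : (Ff a b)^[m-1] A1 = A1 := by
          have e : m - 1 = (m-2) + 1 := by omega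
          rw [e, Function.iterate_succ_apply']
          apply Fin.ext
          rw [hFfval, hFm2, hFb]
        have hs2 := hsign x hxrel (m-1) A1
        rw [hFm1] at hs2
        have hodd : Odd (m-1) := by rw [Nat.odd_iff]; omega
        rw [hodd.neg_one_pow] at hs2
        linarith
      funext j
      show x j = 0
      by_cases hsp : j.1 % Δ = Δ - 1
      · have h1 := hsign x hxrel (L j.1) A1
        rw [hA1j j hsp] at h1
        rw [h1, hxA1, mul_zero]
      · have hr : j.1 % Δ < Δ - 1 := by
          have : j.1 % Δ < Δ := Nat.mod_lt _ (by omega)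
          omega
        have hrlt : j.1 % Δ < a-1+1+(b-1) := by omega
        have hrj : (⟨j.1 % Δ, hrlt⟩ : Fin (a-1+1+(b-1))).1 % Δ ≠ Δ - 1 := by
          show j.1 % Δ % Δ ≠ Δ - 1
          rw [Nat.mod_eq_of_lt (by omega)]
          omega
        have h2 : ((Ff a b)^[u * (j.1/Δ)] ⟨j.1 % Δ, hrlt⟩).1
            = (j.1 % Δ + (u * (j.1/Δ)) * a) % (a+b) := hIter1 _ hrj _
        have h3 : (j.1 % Δ + (u * (j.1/Δ)) * a) % (a+b) = j.1 := by
          have h4 : X * (u * (j.1/Δ)) ≡ j.1/Δ [MOD m] := by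
            have h5 := hux.mul_right (j.1/Δ)
            rw [one_mul] at h5
            have e : X * (u * (j.1/Δ)) = X * u * (j.1/Δ) := by ring
            rw [e]
            exact h5
          have h6 := h4.mul_left' (c := Δ)
          rw [hN] at h6
          have e7 : ∀ v : ℕ, Δ * (X * (u * v)) = (u * v) * a := by
            intro v; rw [← hax]; ring
          rw [e7 (j.1/Δ)] at h6
          have h8 := h6.add_left (j.1 % Δ)
          have e9 : j.1 % Δ + Δ * (j.1/Δ) = j.1 := by
            have := Nat.div_add_mod j.1 Δ
            omega
          rw [e9] at h8
          rw [Nat.ModEq] at h8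
          rw [h8, Nat.mod_eq_of_lt (by have := j.2; omega)]
        have hFk : (Ff a b)^[u * (j.1/Δ)] ⟨j.1 % Δ, hrlt⟩ = j := Fin.ext (by rw [h2, h3])
        have h10 := hsign x hxrel (u * (j.1/Δ)) ⟨j.1 % Δ, hrlt⟩
        rw [hFk] at h10
        have h11 : x ⟨j.1 % Δ, hrlt⟩ = 0 := hxe ⟨j.1 % Δ, hr⟩
        rw [h10, h11, mul_zero]
  · -- ODD CASE
    rw [if_neg (by omega)]
    refine kerDim _ (EoddL (a-1+1+(b-1)) Δ (fun j => (-1:ℚ)^(L j)))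
      (fun _ => A1) ?_ ?_ ?_
    · intro c
      rw [hkerIff]
      intro i
      by_cases hsp : i.1 % Δ = Δ - 1
      · have hs2 : (Ff a b i).1 % Δ = Δ - 1 := by rw [hFres]; exact hsp
        rw [EoddL_apply, EoddL_apply, if_pos hs2, if_pos hsp]
        by_cases hib : i.1 = b - 1
        · have hFi : (Ff a b i).1 = a - 1 := by rw [hFfval, hib, hFb]
          rw [hFi, hLa, hib, hLb, pow_zero]
          have hodd2 : Odd (m-2) := by rw [Nat.odd_iff]; omega
          rw [hodd2.neg_one_pow]
          ring
        · rw [hstep i hsp hib, pow_succ]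
          ring
      · have hs2 : ¬ (Ff a b i).1 % Δ = Δ - 1 := by rw [hFres]; exact hsp
        rw [EoddL_apply, EoddL_apply, if_neg hs2, if_neg hsp, neg_zero]
    · intro c t
      rw [EoddL_apply]
      have hA1v : (A1 : Fin (a-1+1+(b-1))).1 = a - 1 := rfl
      rw [hA1v, if_pos hsa, hLa, pow_zero, one_mul]
      have ht : t = 0 := Subsingleton.elim t 0
      rw [ht]
    · intro x hx0 hxe
      have hxrel : ∀ i, x (Ff a b i) = - x i := (hkerIff x).mp hx0
      have hxA1 : x A1 = 0 := hxe 0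
      funext j
      show x j = 0
      by_cases hsp : j.1 % Δ = Δ - 1
      · have h1 := hsign x hxrel (L j.1) A1
        rw [hA1j j hsp] at h1
        rw [h1, hxA1, mul_zero]
      · have h2 : ((Ff a b)^[m] j).1 = (j.1 + m * a) % (a+b) := hIter1 j hsp m
        have h3 : (j.1 + m * a) % (a+b) = j.1 := by
          have e : m * a = (a + b) * X := by
            rw [hmdef, Nat.add_mul, hkey, Nat.add_mul]
            ring
          rw [e, Nat.add_mul_mod_self_left, Nat.mod_eq_of_lt (by have := j.2; omega)]
        have hFm : (Ff a b)^[m] j = j := Fin.ext (by rw [h2, h3])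
        have h4 := hsign x hxrel m j
        rw [hFm] at h4
        have hodd : Odd m := Nat.odd_iff.mpr hmo
        rw [hodd.neg_one_pow] at h4
        linarith
end
end
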